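/- arXiv:2105.09313 — 7 statements merged into one kernel-verified Lean document; each statement's English description precedes it below -/
import Mathlib

section
/- In a metric space, for any point $p$ and any finite set $S^*$ with $|S^*| \geq c+1$, the ball $B(p)$ of radius $cost_c(S^*)/(2c)$ around $p$ properly contains at most $c$ points of $S^*$. That is, $|\{q \in S^* : d(p,q) < cost_c(S^*)/(2c)\}| \leq c$. -/
open Finset

/-- `costP c p S`: the sum of the `c` smallest distances from `p` to points of `S \ {p}`,
expressed as the infimum over all `c`-element subsets of `S.erase p` of the sum of distances. -/
noncomputable def costP {X : Type*} [MetricSpace X] [DecidableEq X]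
    (c : ℕ) (p : X) (S : Finset X) : ℝ :=
  sInf ((fun T : Finset X => ∑ q ∈ T, dist p q) '' {T | T ⊆ S.erase p ∧ T.card = c})

/-- `costS c S = min_{p ∈ S} costP c p S`. -/
noncomputable def costS {X : Type*} [MetricSpace X] [DecidableEq X]
    (c : ℕ) (S : Finset X) : ℝ :=
  sInf ((fun p => costP c p S) '' (S : Set X))

lemma costP_nonneg {X : Type*} [MetricSpace X] [DecidableEq X]
    (c : ℕ) (p : X) (S : Finset X) : 0 ≤ costP c p S := by
  apply Real.sInf_nonneg
  rintro x ⟨T, -, rfl⟩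
  exact Finset.sum_nonneg fun q _ => dist_nonneg

theorem stmt1 {X : Type*} [MetricSpace X] [DecidableEq X] (c : ℕ) (hc : 1 ≤ c)
    (Sstar : Finset X) (hcard : c + 1 ≤ Sstar.card) (p : X) :
    (Sstar.filter fun q => dist p q < costS c Sstar / (2 * c)).card ≤ c := by
  by_contra h
  push_neg at h
  set F := Sstar.filter fun q => dist p q < costS c Sstar / (2 * c) with hF
  have hcpos : (0:ℝ) < c := by exact_mod_cast hc
  obtain ⟨q0, hq0⟩ : F.Nonempty := Finset.card_pos.mp (by omega)
  have hq0S : q0 ∈ Sstar := (Finset.mem_filter.mp hq0).1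
  have hcardE : c ≤ (F.erase q0).card := by
    have := Finset.card_erase_of_mem hq0; omega
  obtain ⟨T, hTsub, hTcard⟩ := Finset.exists_subset_card_eq hcardE
  have hTsub' : T ⊆ Sstar.erase q0 := by
    intro q hq
    have hq' := hTsub hq
    rw [Finset.mem_erase] at hq' ⊢
    exact ⟨hq'.1, (Finset.mem_filter.mp hq'.2).1⟩
  have h1 : costP c q0 Sstar ≤ ∑ q ∈ T, dist q0 q := by
    apply csInf_le
    · exact ⟨0, by rintro x ⟨T', -, rfl⟩; exact Finset.sum_nonneg fun q _ => dist_nonneg⟩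
    · exact ⟨T, ⟨hTsub', hTcard⟩, rfl⟩
  have h2 : ∑ q ∈ T, dist q0 q < costS c Sstar := by
    have hne : T.Nonempty := Finset.card_pos.mp (by omega)
    calc ∑ q ∈ T, dist q0 q < ∑ _q ∈ T, costS c Sstar / c := by
          apply Finset.sum_lt_sum_of_nonempty hne
          intro q hq
          have hqF : q ∈ F := (Finset.mem_erase.mp (hTsub hq)).2
          have hq0F := (Finset.mem_filter.mp hq0).2
          have hqd := (Finset.mem_filter.mp hqF).2
          calc dist q0 q ≤ dist q0 p + dist p q := dist_triangle _ _ _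
            _ = dist p q0 + dist p q := by rw [dist_comm]
            _ < costS c Sstar / (2*c) + costS c Sstar / (2*c) := add_lt_add hq0F hqd
            _ = costS c Sstar / c := by ring
      _ = costS c Sstar := by
          rw [Finset.sum_const, hTcard, nsmul_eq_mul]
          field_simp
  have h3 : costS c Sstar ≤ costP c q0 Sstar := by
    apply csInf_le
    · exact ⟨0, by rintro x ⟨q, -, rfl⟩; exact costP_nonneg c q Sstar⟩
    · exact ⟨q0, hq0S, rfl⟩
  linarith
end

section
/- For any point $s$ in a metric space, the number of points $p^* \in S^*$ such that $d(p^*, s) < cost_c(S^*)/(2c)$ is at most $c$. (Equivalently, $s$ is properly contained in at most $c$ of the balls $B(p^*)$, $p^* \in S^*$.) -/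
open Finset

lemma costP_le {X : Type*} [MetricSpace X] [DecidableEq X]
    (c : ℕ) (p : X) (S : Finset X) {T : Finset X} (hT : T ⊆ S.erase p)
    (hTc : T.card = c) : costP c p S ≤ ∑ q ∈ T, dist p q := by
  apply csInf_le
  · apply Set.Finite.bddBelow
    apply Set.Finite.image
    apply ((S.erase p).powerset.finite_toSet).subset
    intro U hU
    exact Finset.mem_coe.mpr (Finset.mem_powerset.mpr hU.1)
  · exact ⟨T, ⟨hT, hTc⟩, rfl⟩

lemma costS_le {X : Type*} [MetricSpace X] [DecidableEq X]
    (c : ℕ) {p : X} {S : Finset X} (hp : p ∈ S) : costS c S ≤ costP c p S := by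
  apply csInf_le
  · exact (S.finite_toSet.image _).bddBelow
  · exact ⟨p, hp, rfl⟩

theorem stmt2 {X : Type*} [MetricSpace X] [DecidableEq X] (c : ℕ) (hc : 1 ≤ c)
    (Sstar : Finset X) (hcard : c + 1 ≤ Sstar.card) (s : X) :
    (Sstar.filter fun pstar => dist pstar s < costS c Sstar / (2 * c)).card ≤ c := by
  by_contra h
  push_neg at h
  set F := Sstar.filter fun pstar => dist pstar s < costS c Sstar / (2 * c) with hF
  have hFne : F.Nonempty := Finset.card_pos.mp (by omega)
  obtain ⟨p, hpF⟩ := hFne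
  have hpS : p ∈ Sstar := (Finset.mem_filter.mp hpF).1
  have hpd : dist p s < costS c Sstar / (2 * c) := (Finset.mem_filter.mp hpF).2
  have hFcard : c ≤ (F.erase p).card := by
    have := Finset.card_erase_of_mem hpF
    omega
  obtain ⟨T, hTsub, hTc⟩ := Finset.exists_subset_card_eq hFcard
  have hTsub' : T ⊆ Sstar.erase p := by
    intro x hx
    have hx' := hTsub hx
    rw [Finset.mem_erase] at hx' ⊢
    exact ⟨hx'.1, (Finset.mem_filter.mp hx'.2).1⟩
  have h1 : costS c Sstar ≤ ∑ q ∈ T, dist p q :=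
    (costS_le c hpS).trans (costP_le c p Sstar hTsub' hTc)
  have hc0 : (0:ℝ) < c := by exact_mod_cast hc
  have h2 : ∑ q ∈ T, dist p q < costS c Sstar := by
    have hTne : T.Nonempty := Finset.card_pos.mp (by omega)
    calc ∑ q ∈ T, dist p q < ∑ _q ∈ T, costS c Sstar / c := by
          apply Finset.sum_lt_sum_of_nonempty hTne
          intro q hq
          have hqF : q ∈ F := (Finset.mem_erase.mp (hTsub hq)).2
          have hqd : dist q s < costS c Sstar / (2 * c) := (Finset.mem_filter.mp hqF).2
          calc dist p q ≤ dist p s + dist s q := dist_triangle p s q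
            _ < costS c Sstar / (2 * c) + costS c Sstar / (2 * c) := by
                rw [dist_comm s q]; linarith
            _ = costS c Sstar / c := by ring
      _ = costS c Sstar := by
          rw [Finset.sum_const, hTc, nsmul_eq_mul]
          field_simp
  linarith
end

section
/- Let $M \subseteq P$ with $|M| < k$ and $cost_c(M) \geq cost_c(S^*)/(2c)$, where $S^*$ is an optimal $k$-subset of $P$ for the $c$-dispersion problem. Then there exists a point $p^* \in S^*$ whose ball $B(p^*)$ of radius $cost_c(S^*)/(2c)$ properly contains fewer than $c$ points of $M$. -/
open Finset

theorem stmt4 {X : Type*} [MetricSpace X] [DecidableEq X] (c k : ℕ) (hc : 1 ≤ c)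
    (P Sstar M : Finset X) (hk1 : c + 1 ≤ k) (hk2 : k ≤ P.card)
    (hSP : Sstar ⊆ P) (hScard : Sstar.card = k)
    (hopt : ∀ S ⊆ P, S.card = k → costS c S ≤ costS c Sstar)
    (hMP : M ⊆ P) (hMcard : M.card < k)
    (hMcost : costS c Sstar / (2 * c) ≤ costS c M) :
    ∃ pstar ∈ Sstar,
      (M.filter fun m => dist pstar m < costS c Sstar / (2 * c)).card < c := by
  by_contra h
  push_neg at h
  set r := costS c Sstar / (2 * c) with hr
  have hdc : ∑ p ∈ Sstar, (M.filter fun m => dist p m < r).card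
      = ∑ m ∈ M, (Sstar.filter fun p => dist p m < r).card := by
    simp only [Finset.card_filter]
    rw [Finset.sum_comm]
  have hlb : k * c ≤ ∑ p ∈ Sstar, (M.filter fun m => dist p m < r).card := by
    calc k * c = ∑ _p ∈ Sstar, c := by rw [Finset.sum_const, hScard, smul_eq_mul]
    _ ≤ _ := Finset.sum_le_sum h
  have hex : ∃ m ∈ M, c + 1 ≤ (Sstar.filter fun p => dist p m < r).card := by
    by_contra hno
    push_neg at hno
    have hub : ∑ m ∈ M, (Sstar.filter fun p => dist p m < r).card ≤ M.card * c := by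
      calc _ ≤ ∑ _m ∈ M, c :=
            Finset.sum_le_sum (fun m hm => Nat.lt_succ_iff.mp (hno m hm))
      _ = M.card * c := by rw [Finset.sum_const, smul_eq_mul]
    have hmul : M.card * c < k * c := (Nat.mul_lt_mul_right hc).mpr hMcard
    omega
  obtain ⟨m, hm, hcard⟩ := hex
  obtain ⟨T, hT, hTcard⟩ := Finset.exists_subset_card_eq hcard
  have hTne : T.Nonempty := Finset.card_pos.mp (by omega)
  obtain ⟨p0, hp0⟩ := hTne
  have hp0S : p0 ∈ Sstar := (Finset.mem_filter.mp (hT hp0)).1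
  set T' := T.erase p0 with hT'
  have hT'card : T'.card = c := by
    rw [hT', Finset.card_erase_of_mem hp0, hTcard]; omega
  have hT'sub : T' ⊆ Sstar.erase p0 := by
    intro q hq
    rw [hT', Finset.mem_erase] at hq
    rw [Finset.mem_erase]
    exact ⟨hq.1, (Finset.mem_filter.mp (hT hq.2)).1⟩
  have hset_fin : ((fun T : Finset X => ∑ q ∈ T, dist p0 q) ''
      {T | T ⊆ Sstar.erase p0 ∧ T.card = c}).Finite := by
    apply Set.Finite.image
    exact Set.Finite.subset ((Sstar.erase p0).powerset : Finset (Finset X)).finite_toSet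
      (fun T hT => Finset.mem_coe.mpr (Finset.mem_powerset.mpr hT.1))
  have h1 : costP c p0 Sstar ≤ ∑ q ∈ T', dist p0 q :=
    csInf_le hset_fin.bddBelow ⟨T', ⟨hT'sub, hT'card⟩, rfl⟩
  have hc0 : (0:ℝ) < (c:ℝ) := by exact_mod_cast hc
  have h2 : ∑ q ∈ T', dist p0 q < costS c Sstar := by
    have hlt : ∀ q ∈ T', dist p0 q < 2 * r := by
      intro q hq
      have hq' := Finset.mem_filter.mp (hT (Finset.mem_of_mem_erase hq))
      have hp0' := Finset.mem_filter.mp (hT hp0)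
      calc dist p0 q ≤ dist p0 m + dist q m := dist_triangle_right _ _ _
      _ < r + r := add_lt_add hp0'.2 hq'.2
      _ = 2 * r := by ring
    have hT'ne : T'.Nonempty := Finset.card_pos.mp (by omega)
    calc ∑ q ∈ T', dist p0 q < ∑ _q ∈ T', 2 * r :=
          Finset.sum_lt_sum_of_nonempty hT'ne hlt
    _ = (c:ℝ) * (2 * r) := by rw [Finset.sum_const, hT'card, nsmul_eq_mul]
    _ = costS c Sstar := by rw [hr]; field_simp
  have h3 : costS c Sstar ≤ costP c p0 Sstar := by
    apply csInf_le
    · exact Set.Finite.bddBelow (Sstar.finite_toSet.image _)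
    · exact ⟨p0, hp0S, rfl⟩
  linarith
end

section
/- Let $S_i \subseteq P$ with $cost_c(S_i) \geq cost_c(S^*)/(2c)$ and $|S_i| < k$, and let $p^* \in S^*$ be such that the ball of radius $cost_c(S^*)/(2c)$ around $p^*$ properly contains at most $c-1$ points of $S_i$. Then $cost_c(p^*, S_i \cup \{p^*\}) \geq cost_c(S^*)/(2c)$. -/
open Finset

theorem stmt5 {X : Type*} [MetricSpace X] [DecidableEq X] (c k : ℕ) (hc : 1 ≤ c)
    (hk : c + 1 ≤ k) (P Sstar Si : Finset X)
    (hSP : Sstar ⊆ P) (hScard : Sstar.card = k)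
    (hopt : ∀ S ⊆ P, S.card = k → costS c S ≤ costS c Sstar)
    (hSiP : Si ⊆ P) (hSicard : Si.card < k) (hSi1 : c + 1 ≤ Si.card)
    (hSicost : costS c Sstar / (2 * c) ≤ costS c Si)
    (pstar : X) (hps : pstar ∈ Sstar)
    (hball : (Si.filter fun q => dist pstar q < costS c Sstar / (2 * c)).card ≤ c - 1) :
    costS c Sstar / (2 * c) ≤ costP c pstar (insert pstar Si) := by
  set r := costS c Sstar / (2 * c) with hr
  unfold costP
  have herase : (insert pstar Si).erase pstar = Si.erase pstar := by
    simp [Finset.erase_insert_eq_erase]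
  have hcardE : c ≤ (Si.erase pstar).card := by
    have := Finset.pred_card_le_card_erase (a := pstar) (s := Si)
    omega
  obtain ⟨T0, hT0sub, hT0card⟩ := Finset.exists_subset_card_eq hcardE
  apply le_csInf
  · exact ⟨_, ⟨T0, ⟨herase ▸ hT0sub, hT0card⟩, rfl⟩⟩
  · rintro x ⟨T, ⟨hTsub, hTcard⟩, rfl⟩
    rw [herase] at hTsub
    -- T has card c, but at most c-1 points of Si are within r of pstar,
    -- so some q ∈ T has dist pstar q ≥ r.
    have hfilter : (T.filter fun q => dist pstar q < r).card ≤ c - 1 := by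
      refine le_trans (Finset.card_le_card ?_) hball
      exact Finset.filter_subset_filter _ (hTsub.trans (Finset.erase_subset _ _))
    have hex : ∃ q ∈ T, ¬ dist pstar q < r := by
      by_contra h
      push_neg at h
      have : T.filter (fun q => dist pstar q < r) = T :=
        Finset.filter_eq_self.mpr h
      rw [this, hTcard] at hfilter
      omega
    obtain ⟨q, hqT, hq⟩ := hex
    push_neg at hq
    calc r ≤ dist pstar q := hq
      _ ≤ ∑ q ∈ T, dist pstar q :=
        Finset.single_le_sum (f := fun y => dist pstar y) (fun i _ => dist_nonneg) hqT
end

section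
/- The base case of the greedy analysis: if $S_{c+1}$ is a $(c+1)$-subset of $P$ maximizing $cost_c$ among all $(c+1)$-subsets, and $S^*$ is any $k$-subset of $P$ with $k \geq c+1$, then $cost_c(S_{c+1}) \geq cost_c(S^*)$. In particular, any $(c+1)$-subset of $S^*$ consisting of a point $p$ achieving the minimum together with its $c$ nearest neighbors witnesses this. -/
open Finset

theorem stmt8 {X : Type*} [MetricSpace X] [DecidableEq X] (c k : ℕ) (hc : 1 ≤ c)
    (hk : c + 1 ≤ k) (P Sc1 Sstar : Finset X)
    (h1 : Sc1 ⊆ P) (h2 : Sc1.card = c + 1)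
    (hmax : ∀ T ⊆ P, T.card = c + 1 → costS c T ≤ costS c Sc1)
    (h3 : Sstar ⊆ P) (h4 : Sstar.card = k) :
    costS c Sstar ≤ costS c Sc1 := by
  obtain ⟨T, hTS, hTcard⟩ := Finset.exists_subset_card_eq (show c + 1 ≤ Sstar.card by omega)
  have key : costS c Sstar ≤ costS c T := by
    apply le_csInf
    · obtain ⟨q, hq⟩ := Finset.card_pos.mp (show 0 < T.card by omega)
      exact ⟨costP c q T, ⟨q, hq, rfl⟩⟩
    · rintro b ⟨q, hq, rfl⟩
      have hqT : q ∈ T := hq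
      have hq' : q ∈ Sstar := hTS hqT
      have step1 : costS c Sstar ≤ costP c q Sstar := by
        apply csInf_le
        · exact ⟨0, by rintro x ⟨r, -, rfl⟩; exact costP_nonneg c r Sstar⟩
        · exact ⟨q, hq', rfl⟩
      have step2 : costP c q Sstar ≤ costP c q T := by
        apply csInf_le_csInf
        · refine ⟨0, ?_⟩
          rintro x ⟨U, -, rfl⟩
          exact Finset.sum_nonneg fun r _ => dist_nonneg
        · refine ⟨∑ r ∈ T.erase q, dist q r, T.erase q, ⟨le_refl _, ?_⟩, rfl⟩
          rw [Finset.card_erase_of_mem hqT, hTcard]; omega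
        · rintro x ⟨U, ⟨hU1, hU2⟩, rfl⟩
          exact ⟨U, ⟨hU1.trans (Finset.erase_subset_erase q hTS), hU2⟩, rfl⟩
      show costS c Sstar ≤ costP c q T
      linarith
  exact key.trans (hmax T (hTS.trans h3) hTcard)
end

section
/- Let $G=(V,E)$ be a graph with the metric $d(u,v)=1$ if $\{u,v\} \in E$ and $d(u,v)=2$ otherwise (for $u \neq v$). For integers $c \geq 1$ and $k \geq c+1$: $G$ has an independent set of size $k$ if and only if there exists a subset $S_k \subseteq V$ of size $k$ with $cost_c(S_k) = 2c$. -/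
open Finset

/-- `costPd d c p S`: the sum of the `c` smallest `d`-distances from `p` to points of
`S \ {p}`, expressed as the infimum over all `c`-element subsets of `S.erase p`. -/
noncomputable def costPd {X : Type*} [DecidableEq X] (d : X → X → ℝ)
    (c : ℕ) (p : X) (S : Finset X) : ℝ :=
  sInf ((fun T : Finset X => ∑ q ∈ T, d p q) '' {T | T ⊆ S.erase p ∧ T.card = c})

/-- `costSd d c S = min_{p ∈ S} costPd d c p S`. -/
noncomputable def costSd {X : Type*} [DecidableEq X] (d : X → X → ℝ)
    (c : ℕ) (S : Finset X) : ℝ :=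
  sInf ((fun p => costPd d c p S) '' (S : Set X))

theorem stmt12 {V : Type*} [Fintype V] [DecidableEq V] (G : SimpleGraph V)
    [DecidableRel G.Adj] (d : V → V → ℝ)
    (hd : ∀ u v, d u v = if u = v then 0 else if G.Adj u v then 1 else 2)
    (c k : ℕ) (hc : 1 ≤ c) (hk : c + 1 ≤ k) (hkn : k ≤ Fintype.card V) :
    (∃ I : Finset V, I.card = k ∧ ∀ u ∈ I, ∀ v ∈ I, ¬ G.Adj u v) ↔
      (∃ S : Finset V, S.card = k ∧ costSd d c S = 2 * c) := by
  have hd02 : ∀ u v : V, u ≠ v → d u v ≤ 2 ∧ 0 ≤ d u v := by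
    intro u v h
    rw [hd, if_neg h]
    split <;> norm_num
  constructor
  · rintro ⟨I, hIcard, hInd⟩
    refine ⟨I, hIcard, ?_⟩
    have hdist : ∀ p ∈ I, ∀ q ∈ I, p ≠ q → d p q = 2 := by
      intro p hp q hq hpq
      rw [hd, if_neg hpq, if_neg (hInd p hp q hq)]
    have hcp : ∀ p ∈ I, costPd d c p I = 2 * c := by
      intro p hp
      have himg : (fun T : Finset V => ∑ q ∈ T, d p q) ''
          {T | T ⊆ I.erase p ∧ T.card = c} = {(2 * c : ℝ)} := by
        have hsum : ∀ T : Finset V, T ⊆ I.erase p → T.card = c →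
            ∑ q ∈ T, d p q = 2 * c := by
          intro T hTsub hTc
          have : ∀ q ∈ T, d p q = 2 := by
            intro q hq
            have hq' := Finset.mem_erase.mp (hTsub hq)
            exact hdist p hp q hq'.2 (Ne.symm hq'.1)
          rw [Finset.sum_congr rfl this, Finset.sum_const, hTc]
          push_cast; ring
        ext x
        simp only [Set.mem_image, Set.mem_setOf_eq, Set.mem_singleton_iff]
        constructor
        · rintro ⟨T, ⟨hTsub, hTc⟩, rfl⟩
          exact hsum T hTsub hTc
        · rintro rfl
          obtain ⟨T, hTsub, hTc⟩ := Finset.exists_subset_card_eq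
            (show c ≤ (I.erase p).card by
              rw [Finset.card_erase_of_mem hp, hIcard]; omega)
          exact ⟨T, ⟨hTsub, hTc⟩, hsum T hTsub hTc⟩
      unfold costPd
      rw [himg, csInf_singleton]
    unfold costSd
    have himg2 : (fun p => costPd d c p I) '' ↑I = {(2 * c : ℝ)} := by
      ext x
      simp only [Set.mem_image, Finset.mem_coe, Set.mem_singleton_iff]
      constructor
      · rintro ⟨p, hp, rfl⟩; exact hcp p hp
      · rintro rfl
        obtain ⟨p, hp⟩ := Finset.card_pos.mp (show 0 < I.card by omega)
        exact ⟨p, hp, hcp p hp⟩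
    rw [himg2, csInf_singleton]
  · rintro ⟨S, hScard, hcost⟩
    refine ⟨S, hScard, ?_⟩
    intro u hu v hv hadj
    have huv : u ≠ v := G.ne_of_adj hadj
    -- any point's costPd is nonneg
    have hbdd0 : ∀ p : V, ∀ x ∈ (fun T : Finset V => ∑ q ∈ T, d p q) ''
        {T | T ⊆ S.erase p ∧ T.card = c}, (0 : ℝ) ≤ x := by
      rintro p x ⟨T, ⟨hTsub, _⟩, rfl⟩
      refine Finset.sum_nonneg fun q hq => ?_
      exact (hd02 p q (Ne.symm (Finset.mem_erase.mp (hTsub hq)).1)).2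
    -- costPd u S ≤ 2c - 1
    have hvErase : v ∈ S.erase u := Finset.mem_erase.mpr ⟨Ne.symm huv, hv⟩
    obtain ⟨T, hvT, hTsub, hTc⟩ := Finset.exists_subsuperset_card_eq
      (Finset.singleton_subset_iff.mpr hvErase)
      (show ({v} : Finset V).card ≤ c by simp [hc])
      (show c ≤ (S.erase u).card by
        rw [Finset.card_erase_of_mem hu, hScard]; omega)
    have hsumle : ∑ q ∈ T, d u q ≤ 2 * c - 1 := by
      have hvT' : v ∈ T := hvT (Finset.mem_singleton_self v)
      rw [← Finset.sum_erase_add T _ hvT']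
      have h1 : d u v = 1 := by
        rw [hd, if_neg huv, if_pos hadj]
      have h2 : ∑ q ∈ T.erase v, d u q ≤ 2 * (c - 1 : ℕ) := by
        calc ∑ q ∈ T.erase v, d u q ≤ ∑ _q ∈ T.erase v, (2 : ℝ) := by
              refine Finset.sum_le_sum fun q hq => ?_
              exact (hd02 u q (Ne.symm (Finset.mem_erase.mp
                (hTsub (Finset.erase_subset v T hq))).1)).1
          _ = 2 * (c - 1 : ℕ) := by
              rw [Finset.sum_const, Finset.card_erase_of_mem hvT', hTc,
                nsmul_eq_mul, Nat.cast_sub hc]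
              push_cast; ring
      have hcast : ((c - 1 : ℕ) : ℝ) = (c : ℝ) - 1 := by
        rw [Nat.cast_sub hc]; norm_num
      rw [h1]
      rw [hcast] at h2
      linarith
    have hcpu : costPd d c u S ≤ 2 * c - 1 := by
      unfold costPd
      refine le_trans (csInf_le ⟨0, fun x hx => hbdd0 u x hx⟩
        ⟨T, ⟨hTsub, hTc⟩, rfl⟩) hsumle
    have hcs : costSd d c S ≤ costPd d c u S := by
      unfold costSd
      refine csInf_le ⟨0, ?_⟩ ⟨u, hu, rfl⟩
      rintro x ⟨p, hp, rfl⟩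
      unfold costPd
      refine le_csInf ?_ (fun x hx => hbdd0 p x hx)
      obtain ⟨T', hT'sub, hT'c⟩ := Finset.exists_subset_card_eq
        (show c ≤ (S.erase p).card by
          rw [Finset.card_erase_of_mem hp, hScard]; omega)
      exact ⟨_, ⟨T', ⟨hT'sub, hT'c⟩, rfl⟩⟩
    rw [hcost] at hcs
    have : (1 : ℝ) ≤ c := by exact_mod_cast hc
    linarith
end

section
/- For $c = 1$, the greedy 2-factor guarantee specializes as follows: in a metric space, if $S^*$ is a $k$-subset maximizing the minimum pairwise distance, and we greedily build $S_2 \subseteq S_3 \subseteq \cdots \subseteq S_k$ by starting with a farthest pair and repeatedly adding the point maximizing the new minimum pairwise distance, then $\min_{p \neq q \in S_k} d(p,q) \geq \frac{1}{2} \min_{p \neq q \in S^*} d(p,q)$. -/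
open Finset

/-- The max-min dispersion cost of a set: the minimum pairwise distance. -/
noncomputable def minDist {X : Type*} [MetricSpace X] (S : Finset X) : ℝ :=
  sInf {r | ∃ p ∈ S, ∃ q ∈ S, p ≠ q ∧ r = dist p q}

lemma minDist_bddBelow {X : Type*} [MetricSpace X] (S : Finset X) :
    BddBelow {r | ∃ p ∈ S, ∃ q ∈ S, p ≠ q ∧ r = dist p q} :=
  ⟨0, fun _ ⟨_, _, _, _, _, hr⟩ => hr ▸ dist_nonneg⟩

lemma minDist_nonneg {X : Type*} [MetricSpace X] (S : Finset X) : 0 ≤ minDist S :=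
  Real.sInf_nonneg (fun _ ⟨_, _, _, _, _, hr⟩ => hr ▸ dist_nonneg)

lemma minDist_le_dist {X : Type*} [MetricSpace X] {S : Finset X} {p q : X}
    (hp : p ∈ S) (hq : q ∈ S) (hne : p ≠ q) : minDist S ≤ dist p q :=
  csInf_le (minDist_bddBelow S) ⟨p, hp, q, hq, hne, rfl⟩

lemma le_minDist {X : Type*} [MetricSpace X] {S : Finset X} {m : ℝ} {a b : X}
    (ha : a ∈ S) (hb : b ∈ S) (hab : a ≠ b)
    (h : ∀ p ∈ S, ∀ q ∈ S, p ≠ q → m ≤ dist p q) : m ≤ minDist S :=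
  le_csInf ⟨dist a b, a, ha, b, hb, hab, rfl⟩
    (fun _ ⟨p, hp, q, hq, hne, hr⟩ => hr ▸ h p hp q hq hne)

theorem stmt19 {X : Type*} [MetricSpace X] [DecidableEq X] (k : ℕ) (hk : 2 ≤ k)
    (P Sstar : Finset X) (hkP : k ≤ P.card)
    (hSP : Sstar ⊆ P) (hScard : Sstar.card = k)
    (hopt : ∀ S ⊆ P, S.card = k → minDist S ≤ minDist Sstar)
    (S : ℕ → Finset X)
    (hbase : S 2 ⊆ P ∧ (S 2).card = 2 ∧
      ∀ p ∈ P, ∀ q ∈ P, dist p q ≤ minDist (S 2))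
    (hstep : ∀ j, 3 ≤ j → j ≤ k → ∃ p ∈ P, p ∉ S (j - 1) ∧
      S j = insert p (S (j - 1)) ∧
      ∀ q ∈ P, q ∉ S (j - 1) → minDist (insert q (S (j - 1))) ≤ minDist (S j)) :
    minDist Sstar / 2 ≤ minDist (S k) := by
  obtain ⟨hS2P, hS2card, hS2max⟩ := hbase
  set r := minDist Sstar with hr
  rcases le_or_gt r 0 with h0 | h0
  · linarith [minDist_nonneg (S k)]
  -- r > 0
  have hr_lb : ∀ p ∈ Sstar, ∀ q ∈ Sstar, p ≠ q → r ≤ dist p q :=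
    fun p hp q hq hne => minDist_le_dist hp hq hne
  have key : ∀ j, 2 ≤ j → j ≤ k → S j ⊆ P ∧ (S j).card = j ∧ r / 2 ≤ minDist (S j) := by
    intro j hj
    induction j, hj using Nat.le_induction with
    | base =>
      intro _
      refine ⟨hS2P, hS2card, ?_⟩
      obtain ⟨a, ha, b, hb, hab⟩ := Finset.one_lt_card.mp (by omega : 1 < Sstar.card)
      have h1 : r ≤ dist a b := hr_lb a ha b hb hab
      have h2 : dist a b ≤ minDist (S 2) := hS2max a (hSP ha) b (hSP hb)
      linarith
    | succ n hn ih =>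
      intro hnk
      obtain ⟨hTP, hTcard, hTmin⟩ := ih (by omega)
      obtain ⟨p, hpP, hpT, hSeq, hgreedy⟩ := hstep (n + 1) (by omega) hnk
      simp only [Nat.add_sub_cancel] at hpT hSeq hgreedy
      -- pigeonhole: there is q ∈ Sstar far from all of S n
      have hex : ∃ q ∈ Sstar, ∀ s ∈ S n, r / 2 ≤ dist q s := by
        by_contra hcon
        push_neg at hcon
        have hcon' : ∀ q : X, ∃ s : X, q ∈ Sstar → s ∈ S n ∧ dist q s < r / 2 := by
          intro q
          by_cases hq : q ∈ Sstar
          · obtain ⟨s, hs1, hs2⟩ := hcon q hq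
            exact ⟨s, fun _ => ⟨hs1, hs2⟩⟩
          · exact ⟨q, fun h => absurd h hq⟩
        choose f hf using hcon'
        obtain ⟨x, hx, y, hy, hxy, hfeq⟩ :=
          Finset.exists_ne_map_eq_of_card_lt_of_maps_to
            (by rw [hTcard, hScard]; omega) (fun q hq => (hf q hq).1)
        have h1 : dist x (f x) < r / 2 := (hf x hx).2
        have h2 : dist y (f y) < r / 2 := (hf y hy).2
        have h3 : r ≤ dist x y := hr_lb x hx y hy hxy
        have h4 : dist x y ≤ dist x (f x) + dist (f x) y := dist_triangle x (f x) y
        have h5 : dist (f x) y = dist y (f y) := by rw [hfeq, dist_comm]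
        linarith
      obtain ⟨q, hqS, hq⟩ := hex
      have hqP : q ∈ P := hSP hqS
      have hqT : q ∉ S n := by
        intro hmem
        have := hq q hmem
        simp at this
        linarith
      -- S n is nonempty
      obtain ⟨t, ht⟩ := Finset.card_pos.mp (by omega : 0 < (S n).card)
      have hqt : q ≠ t := fun h => hqT (h ▸ ht)
      have hins : r / 2 ≤ minDist (insert q (S n)) := by
        refine le_minDist (Finset.mem_insert_self q (S n)) (Finset.mem_insert_of_mem ht) hqt ?_
        intro p1 hp1 p2 hp2 hne
        rcases Finset.mem_insert.mp hp1 with h1 | h1 <;>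
          rcases Finset.mem_insert.mp hp2 with h2 | h2
        · exact absurd (h1.trans h2.symm) hne
        · exact h1 ▸ hq p2 h2
        · rw [dist_comm]; exact h2 ▸ hq p1 h1
        · exact le_trans hTmin (minDist_le_dist h1 h2 hne)
      refine ⟨?_, ?_, le_trans hins (hgreedy q hqP hqT)⟩
      · rw [hSeq]
        exact Finset.insert_subset hpP hTP
      · rw [hSeq, Finset.card_insert_of_notMem hpT, hTcard]
  exact (key k hk le_rfl).2.2
end
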